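/- arXiv:2106.06266 — 4 statements merged into one kernel-verified Lean document; each statement's English description precedes it below -/
import Mathlib

section
/- In the setting of the Wasserstein ambiguity set with cost d(y,z) = |y^s − z^s| (s ≥ 1) around a reference measure P̂ on [0,∞) with finite s-th moment, the optimal dual multiplier λ*(x) for the worst-case probability sup{P(x,∞) : W_{d,1}(P,P̂) ≤ δ} is strictly positive for all sufficiently large x; i.e., there exists x₀ such that λ*(x) > 0 for all x > x₀. -/
open MeasureTheory

/-- The dual objective of the worst-case probability problem in a Wasserstein
ball with cost `d(y,z) = |y^s − z^s|`:
`λ ↦ λδ + E_{P̂}[ sup_{z ≥ 0} ( 1_{(x,∞)}(z) − λ |X^s − z^s| ) ]`. -/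
noncomputable def dualObjective (s δ x : ℝ) (Phat : Measure ℝ) (lam : ℝ) : ℝ :=
  lam * δ + ∫ X, sSup {v : ℝ | ∃ z : ℝ, 0 ≤ z ∧
    v = (if x < z then (1:ℝ) else 0) - lam * |X ^ s - z ^ s|} ∂Phat

/-- For a reference measure `P̂` on `[0,∞)` with finite `s`-th moment and any
radius `δ ∈ (0,∞)`, the optimal dual multiplier `λ*(x)` is strictly positive
for all sufficiently large `x`. -/
theorem stmt_9 (s δ : ℝ) (hs : 1 ≤ s) (hδ : 0 < δ)
    (Phat : Measure ℝ) [IsProbabilityMeasure Phat] (hP : Phat (Set.Iio 0) = 0)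
    (hmom : Integrable (fun y => y ^ s) Phat) :
    ∃ x₀ : ℝ, ∀ x > x₀, ∀ lam : ℝ, 0 ≤ lam →
      (∀ mu : ℝ, 0 ≤ mu → dualObjective s δ x Phat lam ≤ dualObjective s δ x Phat mu) →
      0 < lam := by
  have hs0 : (0:ℝ) ≤ s := le_trans zero_le_one hs
  set E : ℝ := ∫ y, y ^ s ∂Phat with hEdef
  have hXpos : ∀ᵐ X ∂Phat, 0 ≤ X := by
    rw [ae_iff]
    have : {X : ℝ | ¬ 0 ≤ X} = Set.Iio 0 := by ext y; simp [not_le]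
    rw [this]; exact hP
  have hE0 : 0 ≤ E :=
    integral_nonneg_of_ae (hXpos.mono fun X hX => Real.rpow_nonneg hX s)
  refine ⟨max 1 (2*δ + 2*E + 1), fun x hx lam hlam hmin => ?_⟩
  have hx1 : 1 < x := lt_of_le_of_lt (le_max_left _ _) hx
  have hx0 : 0 < x := lt_trans one_pos hx1
  have hxs : 2*δ + 2*E + 1 < x ^ s := by
    have h1 : x ^ (1:ℝ) ≤ x ^ s := Real.rpow_le_rpow_of_exponent_le hx1.le hs
    rw [Real.rpow_one] at h1
    exact lt_of_lt_of_le (lt_of_le_of_lt (le_max_right 1 _) hx) h1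
  set c : ℝ := x ^ s - 2*δ with hcdef
  have hcE : 2*E + 1 ≤ c := by simp only [hcdef]; linarith
  have hcpos : 0 < c := by linarith
  set mu : ℝ := 1 / (2*δ) with hmudef
  have hmu0 : 0 < mu := by positivity
  -- dualObjective at 0 equals 1
  have hD0 : dualObjective s δ x Phat 0 = 1 := by
    have hpt : ∀ X : ℝ, sSup {v : ℝ | ∃ z : ℝ, 0 ≤ z ∧
        v = (if x < z then (1:ℝ) else 0) - 0 * |X ^ s - z ^ s|} = 1 := by
      intro X
      have hub : ∀ v ∈ {v : ℝ | ∃ z : ℝ, 0 ≤ z ∧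
          v = (if x < z then (1:ℝ) else 0) - 0 * |X ^ s - z ^ s|}, v ≤ 1 := by
        rintro v ⟨z, hz, rfl⟩
        split <;> simp
      have hmem : (1:ℝ) ∈ {v : ℝ | ∃ z : ℝ, 0 ≤ z ∧
          v = (if x < z then (1:ℝ) else 0) - 0 * |X ^ s - z ^ s|} := by
        refine ⟨x + 1, by linarith, ?_⟩
        rw [if_pos (by linarith)]; ring
      exact le_antisymm (csSup_le ⟨1, hmem⟩ hub) (le_csSup ⟨1, hub⟩ hmem)
    simp only [dualObjective, hpt]
    simp
  -- dualObjective at mu is < 1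
  have hDmu : dualObjective s δ x Phat mu < 1 := by
    have hbound : ∀ X : ℝ, 0 ≤ X → sSup {v : ℝ | ∃ z : ℝ, 0 ≤ z ∧
        v = (if x < z then (1:ℝ) else 0) - mu * |X ^ s - z ^ s|} ≤ X ^ s / c := by
      intro X hX
      have hXs0 : 0 ≤ X ^ s := Real.rpow_nonneg hX s
      refine csSup_le ⟨(if x < (0:ℝ) then (1:ℝ) else 0) - mu * |X ^ s - (0:ℝ) ^ s|,
        ⟨0, le_refl 0, rfl⟩⟩ ?_
      rintro v ⟨z, hz, rfl⟩
      have habs : 0 ≤ |X ^ s - z ^ s| := abs_nonneg _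
      have hnn : 0 ≤ mu * |X ^ s - z ^ s| := mul_nonneg hmu0.le habs
      split_ifs with h
      · -- x < z
        have hzs : x ^ s ≤ z ^ s := Real.rpow_le_rpow hx0.le h.le hs0
        by_cases hXc : c ≤ X ^ s
        · have h1 : (1:ℝ) ≤ X ^ s / c := (one_le_div hcpos).2 hXc
          linarith
        · push_neg at hXc
          have habs2 : x ^ s - X ^ s ≤ |X ^ s - z ^ s| := by
            rw [abs_sub_comm]
            calc x ^ s - X ^ s ≤ z ^ s - X ^ s := by linarith
              _ ≤ |z ^ s - X ^ s| := le_abs_self _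
          have hle : mu * (x ^ s - X ^ s) ≤ mu * |X ^ s - z ^ s| :=
            mul_le_mul_of_nonneg_left habs2 hmu0.le
          have hkey : 1 - mu * (x ^ s - X ^ s) ≤ X ^ s / c := by
            have heq : 1 - mu * (x ^ s - X ^ s) = (X ^ s - c) / (2*δ) := by
              rw [hmudef, hcdef]; field_simp; ring
            rw [heq]
            have h1 : (X ^ s - c) / (2*δ) ≤ 0 :=
              div_nonpos_of_nonpos_of_nonneg (by linarith) (by positivity)
            exact le_trans h1 (div_nonneg hXs0 hcpos.le)
          linarith
      · have : 0 ≤ X ^ s / c := div_nonneg hXs0 hcpos.le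
        linarith
    have hInt : (∫ X, sSup {v : ℝ | ∃ z : ℝ, 0 ≤ z ∧
        v = (if x < z then (1:ℝ) else 0) - mu * |X ^ s - z ^ s|} ∂Phat) ≤ E / c := by
      by_cases hi : Integrable (fun X => sSup {v : ℝ | ∃ z : ℝ, 0 ≤ z ∧
          v = (if x < z then (1:ℝ) else 0) - mu * |X ^ s - z ^ s|}) Phat
      · have hg : Integrable (fun X : ℝ => X ^ s / c) Phat := hmom.div_const c
        have := integral_mono_ae hi hg (hXpos.mono fun X hX => hbound X hX)
        calc _ ≤ ∫ X, X ^ s / c ∂Phat := this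
          _ = E / c := by rw [integral_div]
      · rw [integral_undef hi]
        exact div_nonneg hE0 hcpos.le
    have hmuδ : mu * δ = 1/2 := by
      rw [hmudef]; field_simp
    have hEc : E / c < 1/2 := by
      rw [div_lt_iff₀ hcpos]; linarith
    simp only [dualObjective]
    linarith
  rcases hlam.lt_or_eq with h | h
  · exact h
  · exfalso
    have hle := hmin mu hmu0.le
    rw [← h, hD0] at hle
    linarith
end

section
/- Let P̂ be a probability measure on [0,∞), regularly varying with tail index β̂ > s ≥ 1, let δ > 0, and define U(x) implicitly by the slackness condition δ = ∫_{U(x)^{1/s}}^x (x^s − y^s) dF̂(y), where F̂ is the distribution function of P̂. Then U(x)^{1/s} → ∞ as x → ∞. -/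
open MeasureTheory

/-- If `P̂` on `[0,∞)` has regularly varying tail `x^{-β̂} L(x)` with
`β̂ > s ≥ 1` and `U(x)` solves the slackness condition
`δ = ∫_{U(x)^{1/s}}^x (x^s − y^s) dF̂(y)` for all large `x`, then
`U(x)^{1/s} → ∞` as `x → ∞`. -/
theorem stmt_10 (betaHat s δ : ℝ) (hs : 1 ≤ s) (hsb : s < betaHat) (hδ : 0 < δ)
    (L : ℝ → ℝ)
    (hL : ∀ t > (0:ℝ), Filter.Tendsto (fun x => L (t * x) / L x) Filter.atTop (nhds 1))
    (Phat : Measure ℝ) [IsProbabilityMeasure Phat] (hP : Phat (Set.Iio 0) = 0)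
    (htail : ∀ x > (0:ℝ), (Phat (Set.Ioi x)).toReal = x ^ (-betaHat) * L x)
    (U : ℝ → ℝ) (x₁ : ℝ)
    (hU : ∀ x ≥ x₁, 0 ≤ U x ∧ U x ≤ x ^ s)
    (hslack : ∀ x ≥ x₁,
      δ = ∫ y in Set.Ioc ((U x) ^ (1/s)) x, (x ^ s - y ^ s) ∂Phat) :
    Filter.Tendsto (fun x => (U x) ^ (1/s)) Filter.atTop Filter.atTop := by
  have hs0 : (0:ℝ) < s := lt_of_lt_of_le one_pos hs
  -- Step 1: the tail is positive at every positive point.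
  have htailpos : ∀ M > (0:ℝ), 0 < (Phat (Set.Ioi M)).toReal := by
    intro M hM
    by_contra h
    push_neg at h
    have h0 : (Phat (Set.Ioi M)).toReal = 0 := le_antisymm h ENNReal.toReal_nonneg
    have hz : Phat (Set.Ioi M) = 0 := by
      rcases ENNReal.toReal_eq_zero_iff _ |>.mp h0 with h' | h'
      · exact h'
      · exact absurd h' (measure_ne_top _ _)
    have hLz : ∀ x ≥ M, L x = 0 := by
      intro x hx
      have hx0 : 0 < x := lt_of_lt_of_le hM hx
      have hle : Phat (Set.Ioi x) ≤ Phat (Set.Ioi M) :=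
        measure_mono (Set.Ioi_subset_Ioi hx)
      have hxz : (Phat (Set.Ioi x)).toReal = 0 := by
        have h3 : Phat (Set.Ioi x) ≤ 0 := by rw [← hz]; exact hle
        simp [le_zero_iff.mp h3]
      rw [htail x hx0] at hxz
      have hpow : (0:ℝ) < x ^ (-betaHat) := Real.rpow_pos_of_pos hx0 _
      rcases mul_eq_zero.mp hxz with h' | h'
      · exact absurd h' (ne_of_gt hpow)
      · exact h'
    have h1 := hL 1 one_pos
    have h2 : Filter.Tendsto (fun x => L (1 * x) / L x) Filter.atTop (nhds 0) := by
      apply Filter.Tendsto.congr' _ tendsto_const_nhds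
      filter_upwards [Filter.eventually_ge_atTop M] with x hx
      simp [hLz x hx]
    exact one_ne_zero (tendsto_nhds_unique h1 h2)
  -- Step 2: main argument
  rw [Filter.tendsto_atTop]
  intro M0
  set M : ℝ := max M0 1 with hMdef
  have hM0 : (0:ℝ) < M := lt_of_lt_of_le one_pos (le_max_right _ _)
  have hc : 0 < (Phat (Set.Ioi M)).toReal := htailpos M hM0
  set c : ℝ := (Phat (Set.Ioi M)).toReal with hcdef
  -- cdf tends to 1
  have hIic : Filter.Tendsto (fun x => (Phat (Set.Iic x)).toReal) Filter.atTop (nhds 1) := by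
    have h := tendsto_measure_Iic_atTop Phat
    rw [measure_univ] at h
    have := (ENNReal.tendsto_toReal (by simp : (1:ENNReal) ≠ ⊤)).comp h
    simpa [Function.comp_def] using this
  obtain ⟨A, hAM, hAx₁, hA⟩ :
      ∃ A, M ≤ A ∧ x₁ ≤ A ∧ 1 - c/2 < (Phat (Set.Iic A)).toReal := by
    have hev : ∀ᶠ x in Filter.atTop, 1 - c/2 < (Phat (Set.Iic x)).toReal :=
      hIic.eventually (eventually_gt_nhds (by linarith))
    rcases ((Filter.eventually_ge_atTop M).and
      ((Filter.eventually_ge_atTop x₁).and hev)).exists with ⟨A, h1, h2, h3⟩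
    exact ⟨A, h1, h2, h3⟩
  have hA0 : (0:ℝ) < A := lt_of_lt_of_le hM0 hAM
  -- tail at A is small
  have hsplit : (Phat (Set.Iic A)).toReal + (Phat (Set.Ioi A)).toReal = 1 := by
    have h := measure_add_measure_compl (measurableSet_Iic (a := A)) (μ := Phat)
    rw [Set.compl_Iic, measure_univ] at h
    rw [← ENNReal.toReal_add (measure_ne_top _ _) (measure_ne_top _ _), h]
    simp
  have htailA : (Phat (Set.Ioi A)).toReal < c/2 := by linarith
  -- measure of Ioc M A is at least c/2
  have hIocMA : c/2 < (Phat (Set.Ioc M A)).toReal := by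
    have hun : Set.Ioc M A ∪ Set.Ioi A = Set.Ioi M := Set.Ioc_union_Ioi_eq_Ioi hAM
    have hdisj : Disjoint (Set.Ioc M A) (Set.Ioi A) := Set.Ioc_disjoint_Ioi le_rfl
    have := measure_union hdisj measurableSet_Ioi (μ := Phat)
    rw [hun] at this
    have h2 : c = (Phat (Set.Ioc M A)).toReal + (Phat (Set.Ioi A)).toReal := by
      rw [hcdef, this, ENNReal.toReal_add (measure_ne_top _ _) (measure_ne_top _ _)]
    linarith
  -- choose threshold B
  set B : ℝ := (A ^ s + 2*δ/c + 1) ^ (1/s) with hBdef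
  have hinner : (0:ℝ) < A ^ s + 2*δ/c + 1 := by
    have : (0:ℝ) < A ^ s := Real.rpow_pos_of_pos hA0 _
    have : (0:ℝ) < 2*δ/c := by positivity
    positivity
  have hB0 : (0:ℝ) ≤ B := Real.rpow_nonneg hinner.le _
  have hBs : B ^ s = A ^ s + 2*δ/c + 1 := by
    rw [hBdef, ← Real.rpow_mul hinner.le, one_div_mul_cancel (ne_of_gt hs0),
      Real.rpow_one]
  filter_upwards [Filter.eventually_ge_atTop x₁, Filter.eventually_ge_atTop B,
    Filter.eventually_ge_atTop (A + 1)] with x hx₁ hxB hxA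
  by_contra hcon
  push_neg at hcon
  -- abbreviations
  set u : ℝ := U x ^ (1/s) with hudef
  have hu0 : (0:ℝ) ≤ u := Real.rpow_nonneg (hU x hx₁).1 _
  have huM : u < M := lt_of_lt_of_le hcon (le_max_left _ _)
  have hAx : A ≤ x := by linarith
  have hx0 : (0:ℝ) < x := lt_of_lt_of_le hA0 hAx
  have hxs : A ^ s + 2*δ/c + 1 ≤ x ^ s := by
    rw [← hBs]; exact Real.rpow_le_rpow hB0 hxB hs0.le
  -- integrand nonneg on Ioc u x, integrable
  have hcont : Continuous (fun y : ℝ => x ^ s - y ^ s) :=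
    continuous_const.sub (Real.continuous_rpow_const hs0.le)
  have hint : IntegrableOn (fun y : ℝ => x ^ s - y ^ s) (Set.Ioc u x) Phat :=
    hcont.integrableOn_Ioc
  have hnonneg : 0 ≤ᵐ[Phat.restrict (Set.Ioc u x)] fun y : ℝ => x ^ s - y ^ s := by
    filter_upwards [self_mem_ae_restrict measurableSet_Ioc] with y hy
    have hy0 : (0:ℝ) ≤ y := le_trans hu0 hy.1.le
    have : y ^ s ≤ x ^ s := Real.rpow_le_rpow hy0 hy.2 hs0.le
    simp only [Pi.zero_apply]; linarith
  have hsub : Set.Ioc M A ⊆ Set.Ioc u x := Set.Ioc_subset_Ioc huM.le hAx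
  have hmono : (∫ y in Set.Ioc M A, (x ^ s - y ^ s) ∂Phat) ≤
      ∫ y in Set.Ioc u x, (x ^ s - y ^ s) ∂Phat :=
    setIntegral_mono_set hint hnonneg hsub.eventuallyLE
  have hlow : (x ^ s - A ^ s) * (Phat (Set.Ioc M A)).toReal ≤
      ∫ y in Set.Ioc M A, (x ^ s - y ^ s) ∂Phat := by
    apply setIntegral_ge_of_const_le_real measurableSet_Ioc (measure_ne_top _ _)
    · intro y hy
      have hy0 : (0:ℝ) ≤ y := le_trans hM0.le hy.1.le
      have : y ^ s ≤ A ^ s := Real.rpow_le_rpow hy0 hy.2 hs0.le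
      linarith
    · exact hint.mono_set hsub
  have hδeq := hslack x hx₁
  rw [← hudef] at hδeq
  -- derive contradiction
  have hAs : (0:ℝ) < 2*δ/c := by positivity
  have hxA' : 2*δ/c + 1 ≤ x ^ s - A ^ s := by linarith
  have hfinal : (2*δ/c) * (c/2) ≤ (x ^ s - A ^ s) * (Phat (Set.Ioc M A)).toReal := by
    apply mul_le_mul (by linarith) hIocMA.le (by positivity) (by linarith)
  have hkey : (2*δ/c) * (c/2) = δ := by
    field_simp
  nlinarith [hmono, hlow, hδeq, hfinal, hkey,
    mul_le_mul_of_nonneg_right hxA' (le_trans (by positivity) hIocMA.le)]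
end

section
/- Let f : (0,∞) → ℝ satisfy: f ∈ C¹, strictly convex, f(1) = 0, f'(1) = 0, and f restricted to [1,∞) is positive, increasing and regularly varying with index ρ ≥ 1. Suppose f*(0) := lim_{y→∞} f(y)/y = ∞. Let (p_x) with p_x > 0 and p_x → 0 as x → ∞, and suppose for each large x there exists b_x ∈ (1, 1/p_x) solving p_x f(b_x) + (1 − p_x) f((1 − p_x b_x)/(1 − p_x)) = δ, where 0 < δ < f*(0) + f(0). Then p_x b_x → 0 as x → ∞. -/
/-- Lemma (case `f*(0) = ∞`): under Assumption 1 on `f` and the defining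
equation `p_x f(b_x) + (1 − p_x) f((1 − p_x b_x)/(1 − p_x)) = δ`, with
`f(y)/y → ∞`, one has `p_x b_x → 0` as `x → ∞`. -/
theorem stmt_12 (f : ℝ → ℝ) (ρ : ℝ) (hρ : 1 ≤ ρ)
    (hconv : StrictConvexOn ℝ (Set.Ioi (0:ℝ)) f)
    (hdiff : DifferentiableOn ℝ f (Set.Ioi (0:ℝ)))
    (hf1 : f 1 = 0) (hf'1 : deriv f 1 = 0)
    (hpos : ∀ y > (1:ℝ), 0 < f y)
    (hmono : MonotoneOn f (Set.Ici (1:ℝ)))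
    (hRV : ∀ t > (0:ℝ),
      Filter.Tendsto (fun x => f (t * x) / f x) Filter.atTop (nhds (t ^ ρ)))
    (hfstar0 : Filter.Tendsto (fun y => f y / y) Filter.atTop Filter.atTop)
    (δ : ℝ) (hδ : 0 < δ)
    (p b : ℝ → ℝ) (x₀ : ℝ)
    (hp : ∀ x ≥ x₀, 0 < p x)
    (hp0 : Filter.Tendsto p Filter.atTop (nhds 0))
    (hb : ∀ x ≥ x₀, b x ∈ Set.Ioo 1 (1 / p x))
    (heq : ∀ x ≥ x₀,
      p x * f (b x) + (1 - p x) * f ((1 - p x * b x) / (1 - p x)) = δ) :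
    Filter.Tendsto (fun x => p x * b x) Filter.atTop (nhds 0) := by
  -- f is nonnegative on (0, ∞)
  have hd1 : DifferentiableAt ℝ f 1 :=
    (hdiff 1 (by norm_num)).differentiableAt (isOpen_Ioi.mem_nhds (by norm_num))
  have hfnn : ∀ z : ℝ, 0 < z → 0 ≤ f z := by
    intro z hz
    rcases lt_trichotomy z 1 with hz1 | hz1 | hz1
    · have hslope : slope f z 1 ≤ deriv f 1 :=
        hconv.convexOn.slope_le_of_hasDerivAt (Set.mem_Ioi.2 hz) (by norm_num) hz1 hd1.hasDerivAt
      rw [hf'1, slope_def_field, hf1] at hslope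
      have h1z : 0 < 1 - z := by linarith
      have := (div_nonpos_iff.mp hslope)
      rcases this with ⟨h, _⟩ | ⟨_, h⟩
      · linarith
      · linarith
    · rw [hz1, hf1]
    · exact (hpos z hz1).le
  -- key eventual bound: p x * f (b x) ≤ δ
  have hkey : ∀ x ≥ x₀, p x * f (b x) ≤ δ := by
    intro x hx
    have hpx := hp x hx
    have hbx := hb x hx
    have hpb : p x * b x < 1 := by
      have := hbx.2
      calc p x * b x < p x * (1 / p x) := by
            exact mul_lt_mul_of_pos_left this hpx
        _ = 1 := by field_simp
    have hp1 : p x < 1 := by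
      have h : (1:ℝ) < 1 / p x := lt_trans hbx.1 hbx.2
      rw [lt_div_iff₀ hpx, one_mul] at h
      exact h
    have hz : 0 < (1 - p x * b x) / (1 - p x) := by
      apply div_pos <;> linarith
    have := heq x hx
    nlinarith [hfnn _ hz]
  -- now prove tendsto
  rw [NormedAddCommGroup.tendsto_nhds_zero]
  intro ε hε
  -- choose M ≥ 1 with f y / y ≥ δ/ε + 1 for y ≥ M
  obtain ⟨M₀, hM₀⟩ := Filter.eventually_atTop.mp ((Filter.tendsto_atTop.mp hfstar0) (δ / ε + 1))
  set M := max M₀ 1 with hM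
  have hM1 : (1:ℝ) ≤ M := le_max_right _ _
  have hMpos : (0:ℝ) < M := lt_of_lt_of_le one_pos hM1
  have hfge : ∀ y, M ≤ y → δ / ε + 1 ≤ f y / y := fun y hy => hM₀ y ((le_max_left _ _).trans hy)
  have hpev : ∀ᶠ x in Filter.atTop, |p x| < ε / M :=
    (Metric.tendsto_nhds.mp hp0) (ε / M) (div_pos hε hMpos) |>.mono (by
      intro x hx; simpa [Real.dist_eq] using hx)
  filter_upwards [hpev, Filter.eventually_ge_atTop x₀] with x hpx hx
  have hpxpos := hp x hx
  have hbx := hb x hx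
  have hbpos : (0:ℝ) < b x := lt_trans one_pos hbx.1
  have hpbpos : 0 < p x * b x := mul_pos hpxpos hbpos
  rw [Real.norm_eq_abs, abs_of_pos hpbpos]
  rcases le_or_gt (b x) M with hcase | hcase
  · -- b x ≤ M
    have : p x * b x ≤ p x * M := mul_le_mul_of_nonneg_left hcase hpxpos.le
    have hpxM : p x * M < ε := by
      have : p x < ε / M := lt_of_abs_lt hpx
      calc p x * M < (ε / M) * M := by exact mul_lt_mul_of_pos_right this hMpos
        _ = ε := by field_simp
    linarith
  · -- b x > M
    have hfb : δ / ε + 1 ≤ f (b x) / b x := hfge (b x) hcase.le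
    have hfbpos : 0 < f (b x) := hpos _ (lt_of_le_of_lt hM1 hcase)
    have h1 : (δ / ε + 1) * b x ≤ f (b x) := by
      rw [← le_div_iff₀ hbpos]; exact hfb
    have h2 : p x * ((δ / ε + 1) * b x) ≤ p x * f (b x) :=
      mul_le_mul_of_nonneg_left h1 hpxpos.le
    have h3 : p x * b x * (δ / ε + 1) ≤ δ := by
      have := hkey x hx
      nlinarith
    have hde : 0 < δ / ε + 1 := by positivity
    have : p x * b x ≤ δ / (δ / ε + 1) := by
      rw [le_div_iff₀ hde]; exact h3
    have hlt : δ / (δ / ε + 1) < ε := by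
      rw [div_lt_iff₀ hde]
      have : δ / ε * ε = δ := by field_simp
      nlinarith
    linarith
end

section
/- Under the same assumptions on f as before, but with f*(0) = lim_{y→∞} f(y)/y ∈ (0, ∞), and p_x → 0, if b_x ∈ (1, 1/p_x) solves p_x f(b_x) + (1 − p_x) f((1 − p_x b_x)/(1 − p_x)) = δ with 0 < δ < f*(0) + f(0), then p_x b_x → ℓ as x → ∞, where ℓ ∈ (0,1] is the unique solution of ℓ f*(0) + f(1 − ℓ) = δ. -/
open Filter Set Topology

/-- Lemma (case `f*(0) ∈ (0,∞)`): under Assumption 1 on `f`, with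
`f(y)/y → c ∈ (0,∞)` and `f` extended continuously to `0` with value `f0`, if
`b_x ∈ (1, 1/p_x)` solves `p_x f(b_x) + (1 − p_x) f((1 − p_x b_x)/(1 − p_x)) = δ`
with `0 < δ < c + f0`, then `p_x b_x → ℓ`, where `ℓ ∈ (0,1]` is the unique
solution of `ℓ c + f(1 − ℓ) = δ`. -/
theorem stmt_13 (f : ℝ → ℝ) (ρ : ℝ) (hρ : 1 ≤ ρ)
    (hconv : StrictConvexOn ℝ (Set.Ioi (0:ℝ)) f)
    (hdiff : DifferentiableOn ℝ f (Set.Ioi (0:ℝ)))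
    (hf1 : f 1 = 0) (hf'1 : deriv f 1 = 0)
    (hpos : ∀ y > (1:ℝ), 0 < f y)
    (hmono : MonotoneOn f (Set.Ici (1:ℝ)))
    (hRV : ∀ t > (0:ℝ),
      Filter.Tendsto (fun x => f (t * x) / f x) Filter.atTop (nhds (t ^ ρ)))
    (c : ℝ) (hc : 0 < c)
    (hfstar0 : Filter.Tendsto (fun y => f y / y) Filter.atTop (nhds c))
    (hf0 : ContinuousWithinAt f (Set.Ici (0:ℝ)) 0)
    (δ : ℝ) (hδ : 0 < δ) (hδub : δ < c + f 0)
    (p b : ℝ → ℝ) (x₀ : ℝ)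
    (hp : ∀ x ≥ x₀, 0 < p x)
    (hp0 : Filter.Tendsto p Filter.atTop (nhds 0))
    (hb : ∀ x ≥ x₀, b x ∈ Set.Ioo 1 (1 / p x))
    (heq : ∀ x ≥ x₀,
      p x * f (b x) + (1 - p x) * f ((1 - p x * b x) / (1 - p x)) = δ) :
    ∃ ℓ : ℝ, ℓ ∈ Set.Ioc (0:ℝ) 1 ∧ ℓ * c + f (1 - ℓ) = δ ∧
      (∀ ℓ' ∈ Set.Ioc (0:ℝ) 1, ℓ' * c + f (1 - ℓ') = δ → ℓ' = ℓ) ∧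
      Filter.Tendsto (fun x => p x * b x) Filter.atTop (nhds ℓ) := by
  have hcv : ConvexOn ℝ (Set.Ioi (0:ℝ)) f := hconv.convexOn
  have diffat : ∀ y : ℝ, 0 < y → DifferentiableAt ℝ f y := fun y hy =>
    (hdiff y hy).differentiableAt (Ioi_mem_nhds hy)
  -- nonnegativity of f on (0,∞)
  have fnn : ∀ y : ℝ, 0 < y → 0 ≤ f y := by
    intro y hy
    rcases lt_trichotomy y 1 with h1 | h1 | h1
    · have hs := hcv.slope_le_deriv (x := y) (y := 1) hy (by norm_num) h1 (diffat 1 one_pos)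
      rw [hf'1, slope_def_field, hf1] at hs
      have h1y : 0 < 1 - y := by linarith
      have h2 : 0 - f y ≤ 0 * (1 - y) := (div_le_iff₀ h1y).mp hs
      linarith
    · rw [h1, hf1]
    · exact (hpos y h1).le
  -- antitone on (0,1]
  have fanti_pos : ∀ s t : ℝ, 0 < s → s ≤ t → t ≤ 1 → f t ≤ f s := by
    intro s t hs hst ht1
    rcases eq_or_lt_of_le hst with rfl | hlt
    · exact le_refl _
    rcases eq_or_lt_of_le ht1 with rfl | ht1'
    · rw [hf1]; exact fnn s hs
    · have hs1 : s < 1 := lt_trans hlt ht1'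
      set r : ℝ := (t - s) / (1 - s) with hr
      have h1s : 0 < 1 - s := by linarith
      have hr0 : 0 ≤ r := div_nonneg (by linarith) (by linarith)
      have hr1 : r ≤ 1 := (div_le_one h1s).2 (by linarith)
      have key := hcv.2 (mem_Ioi.2 hs) (mem_Ioi.2 one_pos) (by linarith : (0:ℝ) ≤ 1 - r)
        hr0 (by ring)
      have hrr : r * (1 - s) = t - s := div_mul_cancel₀ _ h1s.ne'
      have harg : (1 - r) • s + r • (1:ℝ) = t := by
        simp only [smul_eq_mul]
        nlinarith [hrr]
      rw [harg, hf1, smul_eq_mul, smul_eq_mul, mul_zero, add_zero] at key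
      nlinarith [fnn s hs]
  have fanti : ∀ s t : ℝ, 0 ≤ s → s ≤ t → t ≤ 1 → f t ≤ f s := by
    intro s t hs hst ht1
    rcases eq_or_lt_of_le hs with rfl | hs'
    · rcases eq_or_lt_of_le hst with rfl | hst'
      · exact le_refl _
      have htend : Tendsto f (𝓝[>] (0:ℝ)) (𝓝 (f 0)) :=
        hf0.mono_left (nhdsWithin_mono _ Ioi_subset_Ici_self)
      refine ge_of_tendsto htend ?_
      filter_upwards [Ioo_mem_nhdsGT hst'] with y hy
      exact fanti_pos y t hy.1 hy.2.le ht1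
    · exact fanti_pos s t hs' hst ht1
  -- continuity of f on [0,∞)
  have fcont : ContinuousOn f (Ici (0:ℝ)) := by
    intro y hy
    rcases eq_or_lt_of_le (mem_Ici.1 hy) with rfl | hy'
    · exact hf0
    · exact (diffat y hy').continuousAt.continuousWithinAt
  -- the function g
  set g : ℝ → ℝ := fun l => l * c + f (1 - l) with hg
  have gcont : ContinuousOn g (Icc 0 1) := by
    apply ContinuousOn.add
    · exact (continuousOn_id.mul continuousOn_const)
    · apply fcont.comp (continuousOn_const.sub continuousOn_id)
      intro l hl
      simp only [mem_Ici, id_eq, Pi.sub_apply]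
      linarith [hl.2]
  have gmono : StrictMonoOn g (Icc (0:ℝ) 1) := by
    intro a ha b' hb' hab
    have h1 : f (1 - a) ≤ f (1 - b') :=
      fanti (1 - b') (1 - a) (by linarith [hb'.2]) (by linarith) (by linarith [ha.1])
    have h2 : a * c < b' * c := by nlinarith
    show a * c + f (1 - a) < b' * c + f (1 - b')
    linarith
  have g0 : g 0 = 0 := by simp [hg, hf1]
  have g1 : g 1 = c + f 0 := by simp [hg]
  -- existence of ℓ
  obtain ⟨ℓ, hℓmem, hgℓ⟩ : ∃ ℓ ∈ Icc (0:ℝ) 1, g ℓ = δ := by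
    have := intermediate_value_Icc (by norm_num : (0:ℝ) ≤ 1) gcont
    rw [g0, g1] at this
    obtain ⟨ℓ, hℓ, hℓ'⟩ := this ⟨hδ.le, hδub.le⟩
    exact ⟨ℓ, hℓ, hℓ'⟩
  have hℓpos : 0 < ℓ := by
    rcases eq_or_lt_of_le hℓmem.1 with rfl | h
    · rw [g0] at hgℓ; linarith
    · exact h
  have hℓIoc : ℓ ∈ Ioc (0:ℝ) 1 := ⟨hℓpos, hℓmem.2⟩
  -- key monotonicity
  have key_mono : ∀ q u w : ℝ, 0 < q → q ≤ u → u ≤ w → w < 1 →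
      q * f (u / q) + (1 - q) * f ((1 - u) / (1 - q)) ≤
      q * f (w / q) + (1 - q) * f ((1 - w) / (1 - q)) := by
    intro q u w hq hqu huw hw1
    rcases eq_or_lt_of_le huw with rfl | huw'
    · exact le_refl _
    have hq1 : q < 1 := lt_of_le_of_lt (hqu.trans huw) hw1
    have h1q : 0 < 1 - q := by linarith
    have hwq : 0 < w - q := by linarith
    set t : ℝ := (u - q) / (w - q) with ht
    have ht0 : 0 ≤ t := div_nonneg (by linarith) hwq.le
    have ht1 : t < 1 := (div_lt_one hwq).2 (by linarith)
    have hwq0 : 0 < w / q := div_pos (by linarith) hq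
    have hwq1 : 0 < (1 - w) / (1 - q) := div_pos (by linarith) h1q
    -- first term
    have k1 := hcv.2 (mem_Ioi.2 one_pos) (mem_Ioi.2 hwq0)
      (by linarith : (0:ℝ) ≤ 1 - t) ht0 (by ring)
    have e1 : (1 - t) • (1:ℝ) + t • (w / q) = u / q := by
      simp only [smul_eq_mul, ht]
      field_simp
      ring
    rw [e1, hf1, smul_eq_mul, smul_eq_mul, mul_zero, zero_add] at k1
    -- second term
    have k2 := hcv.2 (mem_Ioi.2 one_pos) (mem_Ioi.2 hwq1)
      (by linarith : (0:ℝ) ≤ 1 - t) ht0 (by ring)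
    have e2 : (1 - t) • (1:ℝ) + t • ((1 - w) / (1 - q)) = (1 - u) / (1 - q) := by
      simp only [smul_eq_mul, ht]
      field_simp
      ring
    rw [e2, hf1, smul_eq_mul, smul_eq_mul, mul_zero, zero_add] at k2
    have hfw : 0 ≤ f (w / q) := fnn _ hwq0
    have hfw2 : 0 ≤ f ((1 - w) / (1 - q)) := fnn _ hwq1
    have K1 := mul_le_mul_of_nonneg_left k1 hq.le
    have K2 := mul_le_mul_of_nonneg_left k2 h1q.le
    have hX : 0 ≤ q * f (w / q) + (1 - q) * f ((1 - w) / (1 - q)) :=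
      add_nonneg (mul_nonneg hq.le hfw) (mul_nonneg h1q.le hfw2)
    have K3 : t * (q * f (w / q) + (1 - q) * f ((1 - w) / (1 - q))) ≤
        q * f (w / q) + (1 - q) * f ((1 - w) / (1 - q)) := by
      have h := mul_le_mul_of_nonneg_right ht1.le hX
      simpa using h
    linarith [K1, K2, K3]
  -- eventual positivity of p
  have hppos : ∀ᶠ x in atTop, 0 < p x := by
    filter_upwards [eventually_ge_atTop x₀] with x hx
    exact hp x hx
  -- limit lemma
  have limit_lem : ∀ v : ℝ, 0 < v → v < 1 →
      Tendsto (fun x => p x * f (v / p x) + (1 - p x) * f ((1 - v) / (1 - p x)))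
        atTop (𝓝 (g v)) := by
    intro v hv hv1
    have hpin : Tendsto p atTop (𝓝[>] (0:ℝ)) :=
      tendsto_nhdsWithin_of_tendsto_nhds_of_eventually_within _ hp0 hppos
    have hinv : Tendsto (fun x => (p x)⁻¹) atTop atTop :=
      tendsto_inv_nhdsGT_zero.comp hpin
    have h1 : Tendsto (fun x => v / p x) atTop atTop := by
      simp only [div_eq_mul_inv]
      exact hinv.const_mul_atTop hv
    have term1 : Tendsto (fun x => p x * f (v / p x)) atTop (𝓝 (v * c)) := by
      have h2 : Tendsto (fun x => v * (f (v / p x) / (v / p x))) atTop (𝓝 (v * c)) :=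
        (hfstar0.comp h1).const_mul v
      refine h2.congr' ?_
      filter_upwards [hppos] with x hx
      have hpx : p x ≠ 0 := hx.ne'
      have hv' : v ≠ 0 := hv.ne'
      field_simp
    have ha : Tendsto (fun x => 1 - p x) atTop (𝓝 (1:ℝ)) := by
      have h : Tendsto (fun x => (1:ℝ) - p x) atTop (𝓝 (1 - 0)) :=
        tendsto_const_nhds.sub hp0
      simpa using h
    have hb2 : Tendsto (fun x => (1 - v) / (1 - p x)) atTop (𝓝 (1 - v)) := by
      have h : Tendsto (fun x => (1 - v) / (1 - p x)) atTop (𝓝 ((1 - v) / 1)) :=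
        tendsto_const_nhds.div ha (by norm_num)
      simpa using h
    have hcont : ContinuousAt f (1 - v) :=
      (diffat (1 - v) (by linarith)).continuousAt
    have term2 : Tendsto (fun x => (1 - p x) * f ((1 - v) / (1 - p x)))
        atTop (𝓝 (1 * f (1 - v))) :=
      ha.mul (hcont.tendsto.comp hb2)
    rw [one_mul] at term2
    have := term1.add term2
    simpa [hg] using this
  -- facts about u x = p x * b x
  have hufacts : ∀ x ≥ x₀, p x < p x * b x ∧ p x * b x < 1 := by
    intro x hx
    have hpx := hp x hx
    obtain ⟨hb1, hb2⟩ := hb x hx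
    constructor
    · nlinarith
    · have := mul_lt_mul_of_pos_left hb2 hpx
      rwa [mul_one_div_cancel hpx.ne'] at this
  have hueq : ∀ x ≥ x₀,
      p x * f ((p x * b x) / p x) + (1 - p x) * f ((1 - p x * b x) / (1 - p x)) = δ := by
    intro x hx
    have hpx := (hp x hx).ne'
    rw [mul_div_cancel_left₀ _ hpx]
    exact heq x hx
  refine ⟨ℓ, hℓIoc, hgℓ, ?_, ?_⟩
  · intro ℓ' hℓ' hgℓ'
    refine gmono.injOn ⟨hℓ'.1.le, hℓ'.2⟩ hℓmem ?_
    rw [hgℓ]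
    exact hgℓ'
  · rw [tendsto_order]
    constructor
    · intro a ha
      rcases le_or_gt a 0 with ha0 | ha0
      · filter_upwards [eventually_ge_atTop x₀] with x hx
        have hpx := hp x hx
        have := (hb x hx).1
        nlinarith
      · have ha1 : a < 1 := lt_of_lt_of_le ha hℓmem.2
        have hga : g a < δ := by
          rw [← hgℓ]
          exact gmono ⟨ha0.le, ha1.le⟩ hℓmem ha
        have hev := (limit_lem a ha0 ha1).eventually_lt_const hga
        filter_upwards [hev, eventually_ge_atTop x₀] with x hlt hx
        by_contra hcon
        push_neg at hcon
        obtain ⟨hu1, hu2⟩ := hufacts x hx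
        have := key_mono (p x) (p x * b x) a (hp x hx) hu1.le hcon ha1
        rw [hueq x hx] at this
        linarith
    · intro a ha
      rcases le_or_gt 1 a with ha1 | ha1
      · filter_upwards [eventually_ge_atTop x₀] with x hx
        exact lt_of_lt_of_le (hufacts x hx).2 ha1
      · have ha0 : 0 < a := lt_trans hℓpos ha
        have hga : δ < g a := by
          rw [← hgℓ]
          exact gmono hℓmem ⟨ha0.le, ha1.le⟩ ha
        have hev := (limit_lem a ha0 ha1).eventually_const_lt hga
        have hpev : ∀ᶠ x in atTop, p x < a := hp0.eventually_lt_const ha0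
        filter_upwards [hev, hpev, eventually_ge_atTop x₀] with x hlt hpa hx
        by_contra hcon
        push_neg at hcon
        obtain ⟨hu1, hu2⟩ := hufacts x hx
        have := key_mono (p x) a (p x * b x) (hp x hx) hpa.le hcon hu2
        rw [hueq x hx] at this
        linarith
end
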